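/- arXiv:1403.3434 — 3 statements merged into one kernel-verified Lean document; each statement's English description precedes it below -/
import Mathlib

section
/- (Theorem 2, Case 1: if target 2 is not active then visiting target 1 first is strictly better.) Let x, y1, y2 be points of the Euclidean plane ℝ² with x ≠ y2 and d(x,y1) ≤ d(x,y2), let H = d(x,y1), and let C = x + (H/d(x,y2))·(y2 − x) be the closest reachable point toward target 2. Let λ1, λ2, D1, D2 > 0 and define R12 = λ1·(1 − d(x,y1)/D1) + λ2·(1 − (d(x,y1) + d(y1,y2))/D2) and R21 = λ2·(1 − d(x,y2)/D2) + λ1·(1 − (d(x,y2) + d(y2,y1))/D1). If (λ1/D1)·d(C,y2) > (λ2/D2)·d(C,y1), then R12 > R21. -/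
/-! The point `C` lies on the segment from `x` to `y2` at distance `d(x,y1)` from `x`, so
`d(C,y2) = d(x,y2) - d(x,y1)`, and the triangle inequality through `C` bounds the detour
`d(x,y1) + d(y1,y2) - d(x,y2)` of the order `1 → 2` by `d(C,y1)`. Since
`R12 - R21 = (λ1/D1)(d(x,y2) + d(y1,y2) - d(x,y1)) - (λ2/D2)(d(x,y1) + d(y1,y2) - d(x,y2))`,
the inactivity inequality at `C` makes this difference positive. -/

theorem dist_add_div_dist_smul_sub_eq {E : Type*} [NormedAddCommGroup E] [NormedSpace ℝ E]
    {x y : E} {r : ℝ} (hr : 0 ≤ r) (hrd : r ≤ dist x y) :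
    dist (x + (r / dist x y) • (y - x)) y = dist x y - r := by
  have hratio : r / dist x y ≤ 1 := div_le_one_of_le₀ hrd dist_nonneg
  rw [add_comm x, ← AffineMap.lineMap_apply_module', dist_lineMap_right,
    Real.norm_of_nonneg (by linarith), sub_mul, one_mul,
    div_mul_cancel_of_imp fun h => by linarith]

theorem stmt6_general (x y1 y2 : EuclideanSpace ℝ (Fin 2))
    (hd : dist x y1 ≤ dist x y2)
    (H : ℝ) (hH : H = dist x y1)
    (C : EuclideanSpace ℝ (Fin 2))
    (hC : C = x + (H / dist x y2) • (y2 - x))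
    (lam1 lam2 D1 D2 : ℝ)
    (hlam1 : 0 < lam1) (hlam2 : 0 < lam2) (hD1 : 0 < D1) (hD2 : 0 < D2)
    (R12 R21 : ℝ)
    (hR12 : R12 = lam1 * (1 - dist x y1 / D1)
      + lam2 * (1 - (dist x y1 + dist y1 y2) / D2))
    (hR21 : R21 = lam2 * (1 - dist x y2 / D2)
      + lam1 * (1 - (dist x y2 + dist y2 y1) / D1))
    (hnotactive : (lam1 / D1) * dist C y2 > (lam2 / D2) * dist C y1) :
    R12 > R21 := by
  have hCy2 : dist C y2 = dist x y2 - dist x y1 := by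
    rw [hC, hH]
    exact dist_add_div_dist_smul_sub_eq dist_nonneg hd
  have hdetour : dist x y1 + dist y1 y2 - dist x y2 ≤ dist C y1 := by
    linarith [dist_triangle y1 C y2, dist_comm y1 C]
  have hgain : R12 - R21 = lam1 / D1 * (dist x y2 + dist y1 y2 - dist x y1)
      - lam2 / D2 * (dist x y1 + dist y1 y2 - dist x y2) := by
    rw [hR12, hR21, dist_comm y2 y1]
    ring
  have hw1 : 0 ≤ lam1 / D1 := by positivity
  have hw2 : 0 ≤ lam2 / D2 := by positivity
  have hcompare : lam2 / D2 * (dist x y1 + dist y1 y2 - dist x y2)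
      < lam1 / D1 * (dist x y2 + dist y1 y2 - dist x y1) :=
    calc lam2 / D2 * (dist x y1 + dist y1 y2 - dist x y2)
        ≤ lam2 / D2 * dist C y1 := by gcongr
      _ < lam1 / D1 * dist C y2 := hnotactive
      _ = lam1 / D1 * (dist x y2 - dist x y1) := by rw [hCy2]
      _ ≤ lam1 / D1 * (dist x y2 + dist y1 y2 - dist x y1) := by
        gcongr
        linarith [dist_nonneg (x := y1) (y := y2)]
  linarith

/-- Theorem 2, Case 1: if target 2 is not active, i.e.,
`(λ1/D1)·d(C,y2) > (λ2/D2)·d(C,y1)` where `C` is the closest reachable point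
toward target 2, then visiting target 1 first is strictly better: `R12 > R21`. -/
theorem stmt6 (x y1 y2 : EuclideanSpace ℝ (Fin 2))
    (hx2 : x ≠ y2) (hd : dist x y1 ≤ dist x y2)
    (H : ℝ) (hH : H = dist x y1)
    (C : EuclideanSpace ℝ (Fin 2))
    (hC : C = x + (H / dist x y2) • (y2 - x))
    (lam1 lam2 D1 D2 : ℝ)
    (hlam1 : 0 < lam1) (hlam2 : 0 < lam2) (hD1 : 0 < D1) (hD2 : 0 < D2)
    (R12 R21 : ℝ)
    (hR12 : R12 = lam1 * (1 - dist x y1 / D1)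
      + lam2 * (1 - (dist x y1 + dist y1 y2) / D2))
    (hR21 : R21 = lam2 * (1 - dist x y2 / D2)
      + lam1 * (1 - (dist x y2 + dist y2 y1) / D1))
    (hnotactive : (lam1 / D1) * dist C y2 > (lam2 / D2) * dist C y1) :
    R12 > R21 :=
  stmt6_general x y1 y2 hd H hH C hC lam1 lam2 D1 D2 hlam1 hlam2 hD1 hD2 R12 R21 hR12 hR21
    hnotactive
end

section
/- (Theorem 2: in the two-target, one-agent mission with linear rewards, the one-step lookahead CRH controller selects the optimal path.) Let x, y1, y2 be points of the Euclidean plane ℝ² with x ≠ y2 and d(x,y1) ≤ d(x,y2), let H = d(x,y1), let C = x + (H/d(x,y2))·(y2 − x), and let λ1, λ2, D1, D2 > 0. Define R12 = λ1·(1 − d(x,y1)/D1) + λ2·(1 − (d(x,y1) + d(y1,y2))/D2) and R21 = λ2·(1 − d(x,y2)/D2) + λ1·(1 − (d(x,y2) + d(y2,y1))/D1). Define the reward collected by the CRH controller as J_CRH = R12 if (λ1/D1)·d(C,y2) > (λ2/D2)·d(C,y1) (target 2 is not active and the controller heads toward the only active target 1), and J_CRH = max(R12, R21) otherwise (both headings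 are candidates and their CRH objective values equal R12 and R21 respectively, the controller picking the larger). Then J_CRH = max(R12, R21); that is, the path θ^CRH followed by the CRH controller coincides with the optimal path θ*. -/
/-!
When target 2 is inactive at `C`, the triangle inequality through `C`, together with
`d(C, y₂) = d(x, y₂) - H`, shows that visiting target 1 first loses no reward, so the
controller's choice `R12` is already `max R12 R21`.
-/

theorem dist_add_div_dist_smul_sub_right {E : Type*} [NormedAddCommGroup E] [NormedSpace ℝ E]
    {x y : E} {t : ℝ} (ht0 : 0 ≤ t) (ht : t ≤ dist x y) :
    dist (x + (t / dist x y) • (y - x)) y = dist x y - t := by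
  rcases ht0.eq_or_lt with rfl | ht0
  · simp
  have hxy : 0 < dist x y := ht0.trans_le ht
  have hpoint : x + (t / dist x y) • (y - x) = AffineMap.lineMap x y (t / dist x y) := by
    rw [AffineMap.lineMap_apply, vsub_eq_sub, vadd_eq_add, add_comm]
  rw [hpoint, dist_lineMap_right, Real.norm_of_nonneg (by rw [sub_nonneg, div_le_one hxy]; exact ht),
    sub_mul, div_mul_cancel₀ _ hxy.ne', one_mul]

theorem reward21_le_reward12_of_weighted_dist_le {lam1 lam2 D1 D2 d1 d2 d12 c : ℝ}
    (ha : 0 ≤ lam1 / D1) (hb : 0 ≤ lam2 / D2) (hd12 : 0 ≤ d12)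
    (htri : d12 ≤ c + (d2 - d1)) (hinactive : lam2 / D2 * c ≤ lam1 / D1 * (d2 - d1)) :
    lam2 * (1 - d2 / D2) + lam1 * (1 - (d2 + d12) / D1)
      ≤ lam1 * (1 - d1 / D1) + lam2 * (1 - (d1 + d12) / D2) := by
  have hb_tri : lam2 / D2 * d12 ≤ lam2 / D2 * (c + (d2 - d1)) :=
    mul_le_mul_of_nonneg_left htri hb
  have ha_d12 : 0 ≤ lam1 / D1 * d12 := mul_nonneg ha hd12
  linear_combination hb_tri + hinactive + ha_d12

theorem stmt8_general (x y1 y2 : EuclideanSpace ℝ (Fin 2))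
    (hd : dist x y1 ≤ dist x y2)
    (H : ℝ) (hH : H = dist x y1)
    (C : EuclideanSpace ℝ (Fin 2))
    (hC : C = x + (H / dist x y2) • (y2 - x))
    (lam1 lam2 D1 D2 : ℝ)
    (hlam1 : 0 < lam1) (hlam2 : 0 < lam2) (hD1 : 0 < D1) (hD2 : 0 < D2)
    (R12 R21 : ℝ)
    (hR12 : R12 = lam1 * (1 - dist x y1 / D1)
      + lam2 * (1 - (dist x y1 + dist y1 y2) / D2))
    (hR21 : R21 = lam2 * (1 - dist x y2 / D2)
      + lam1 * (1 - (dist x y2 + dist y2 y1) / D1))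
    (JCRH : ℝ)
    (hJCRH : JCRH =
      if (lam1 / D1) * dist C y2 > (lam2 / D2) * dist C y1
      then R12 else max R12 R21) :
    JCRH = max R12 R21 := by
  subst hJCRH
  split_ifs with hinactive
  · have hCy2 : dist C y2 = dist x y2 - dist x y1 := by
      rw [hC, hH]; exact dist_add_div_dist_smul_sub_right dist_nonneg hd
    have htri : dist y1 y2 ≤ dist C y1 + dist C y2 := by
      simpa only [dist_comm y1 C] using dist_triangle y1 C y2
    rw [hCy2] at hinactive htri
    refine (max_eq_left ?_).symm
    rw [hR12, hR21, dist_comm y2 y1]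
    exact reward21_le_reward12_of_weighted_dist_le (div_pos hlam1 hD1).le
      (div_pos hlam2 hD2).le dist_nonneg htri hinactive.le
  · rfl

/-- Theorem 2: in the two-target, one-agent mission with linear
rewards, the one-step lookahead CRH controller selects the optimal path:
the reward `J_CRH` it collects equals `max R12 R21`. -/
theorem stmt8 (x y1 y2 : EuclideanSpace ℝ (Fin 2))
    (hx2 : x ≠ y2) (hd : dist x y1 ≤ dist x y2)
    (H : ℝ) (hH : H = dist x y1)
    (C : EuclideanSpace ℝ (Fin 2))
    (hC : C = x + (H / dist x y2) • (y2 - x))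
    (lam1 lam2 D1 D2 : ℝ)
    (hlam1 : 0 < lam1) (hlam2 : 0 < lam2) (hD1 : 0 < D1) (hD2 : 0 < D2)
    (R12 R21 : ℝ)
    (hR12 : R12 = lam1 * (1 - dist x y1 / D1)
      + lam2 * (1 - (dist x y1 + dist y1 y2) / D2))
    (hR21 : R21 = lam2 * (1 - dist x y2 / D2)
      + lam1 * (1 - (dist x y2 + dist y2 y1) / D1))
    (JCRH : ℝ)
    (hJCRH : JCRH =
      if (lam1 / D1) * dist C y2 > (lam2 / D2) * dist C y1
      then R12 else max R12 R21) :
    JCRH = max R12 R21 :=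
  stmt8_general x y1 y2 hd H hH C hC lam1 lam2 D1 D2 hlam1 hlam2 hD1 hD2 R12 R21 hR12 hR21 JCRH
    hJCRH
end

section
/- (Two-target specialization of Lemma 2: the greedy one-step lookahead objective over the whole reachable circle is maximized at a heading toward an active target, achieving max(R12, R21).) Let x, y1, y2 be points of the Euclidean plane ℝ² with y1 ≠ y2, x ≠ y2, and 0 < d(x,y1) ≤ d(x,y2); set H = d(x,y1), and let λ1, λ2, D1, D2 > 0 and φ_i(t) = 1 − t/D_i. For each landing point w with d(w,x) = H define the greedy objective J(w) = λ1·φ1(H + d(w,y1)) + λ2·φ2(H + d(w,y1) + d(y1,y2)) if (D1/λ1)·d(w,y1) ≤ (D2/λ2)·d(w,y2), and J(w) = λ2·φ2(H + d(w,y2)) + λ1·φ1(H + d(w,y2) + d(y2,y1)) otherwise. Let C2 = x + (H/d(x,y2))·(y2 − x). Then J(w) ≤ max(R12, R21) for every w with d(w,x) = H, and this bound is attained at w = y1 or at w = C2; here R12 = λ1·(1 − d(x,y1)/D1) + λ2·(1 − (d(x,y1) + d(y1,y2))/D2) and R21 = λ2·(1 − d(x,y2)/D2) + λ1·(1 − (d(x,y2)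 + d(y2,y1))/D1). -/
/-!
Rewards decrease with arrival time, so a landing point on the circle can only lose against
the straight routes from `x`: heading first to `y1` arrives no earlier than at time `H`, and
heading first to `y2` arrives no earlier than at time `d(x, y2)` by the triangle inequality.
The better straight route is realised on the circle: `y1` itself realises `R12`, and `C2`,
lying on the segment `[x, y2]`, realises `R21` as soon as `R12 < R21`, because this inequality
already forces the greedy rule to choose `y2` first at `C2`.
-/

open AffineMap

theorem dist_lineMap_div_dist_right {V P : Type*} [SeminormedAddCommGroup V] [NormedSpace ℝ V]
    [PseudoMetricSpace P] [NormedAddTorsor V P] (p q : P) {r : ℝ} (hr₀ : 0 ≤ r)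
    (hr : r ≤ dist p q) : dist (lineMap p q (r / dist p q)) q = dist p q - r := by
  rw [dist_lineMap_right, Real.norm_eq_abs]
  rcases hr.eq_or_lt with rfl | hlt
  · by_cases h : dist p q = 0 <;> simp [h]
  · have hd : 0 < dist p q := hr₀.trans_lt hlt
    rw [abs_of_nonneg (by rw [sub_nonneg, div_le_one hd]; exact hr)]
    field_simp

noncomputable def routeReward (lamA lamB DA DB L t : ℝ) : ℝ :=
  lamA * (1 - t / DA) + lamB * (1 - (t + L) / DB)

theorem routeReward_antitone {lamA lamB DA DB : ℝ} (hlamA : 0 ≤ lamA) (hlamB : 0 ≤ lamB)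
    (hDA : 0 ≤ DA) (hDB : 0 ≤ DB) (L : ℝ) : Antitone (routeReward lamA lamB DA DB L) := by
  intro s t hst
  unfold routeReward
  gcongr

theorem travelCost_lt_of_routeReward_lt {lam1 lam2 D1 D2 L a b t : ℝ} (hlam1 : 0 < lam1)
    (hlam2 : 0 < lam2) (hD1 : 0 < D1) (hD2 : 0 < D2) (hL : 0 ≤ L) (hb : L - a ≤ b)
    (hlt : routeReward lam1 lam2 D1 D2 L t < routeReward lam2 lam1 D2 D1 L (t + a)) :
    D2 / lam2 * a < D1 / lam1 * b := by
  unfold routeReward at hlt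
  rw [div_mul_eq_mul_div, div_mul_eq_mul_div, div_lt_div_iff₀ hlam2 hlam1]
  have key : lam1 * D2 * (a + L) < lam2 * D1 * (L - a) := by
    have := mul_lt_mul_of_pos_right hlt (mul_pos hD1 hD2)
    field_simp at this
    linarith
  calc D2 * a * lam1 ≤ lam1 * D2 * (a + L) := by nlinarith [mul_pos hlam1 hD2]
    _ < lam2 * D1 * (L - a) := key
    _ ≤ D1 * b * lam2 := by nlinarith [mul_pos hlam2 hD1]

theorem stmt9_general (x y1 y2 : EuclideanSpace ℝ (Fin 2))
    (hd : dist x y1 ≤ dist x y2)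
    (H : ℝ) (hH : H = dist x y1)
    (lam1 lam2 D1 D2 : ℝ)
    (hlam1 : 0 < lam1) (hlam2 : 0 < lam2) (hD1 : 0 < D1) (hD2 : 0 < D2)
    (φ1 φ2 : ℝ → ℝ)
    (hφ1 : ∀ t, φ1 t = 1 - t / D1) (hφ2 : ∀ t, φ2 t = 1 - t / D2)
    (J : EuclideanSpace ℝ (Fin 2) → ℝ)
    (hJ : ∀ w, J w =
      if (D1 / lam1) * dist w y1 ≤ (D2 / lam2) * dist w y2
      then lam1 * φ1 (H + dist w y1) + lam2 * φ2 (H + dist w y1 + dist y1 y2)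
      else lam2 * φ2 (H + dist w y2) + lam1 * φ1 (H + dist w y2 + dist y2 y1))
    (C2 : EuclideanSpace ℝ (Fin 2))
    (hC2 : C2 = x + (H / dist x y2) • (y2 - x))
    (R12 R21 : ℝ)
    (hR12 : R12 = lam1 * (1 - dist x y1 / D1)
      + lam2 * (1 - (dist x y1 + dist y1 y2) / D2))
    (hR21 : R21 = lam2 * (1 - dist x y2 / D2)
      + lam1 * (1 - (dist x y2 + dist y2 y1) / D1)) :
    (∀ w : EuclideanSpace ℝ (Fin 2), dist w x = H → J w ≤ max R12 R21) ∧
      (J y1 = max R12 R21 ∨ J C2 = max R12 R21) := by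
  have hH0 : 0 ≤ H := hH ▸ dist_nonneg
  have hJ' : ∀ w, J w = if (D1 / lam1) * dist w y1 ≤ (D2 / lam2) * dist w y2
      then routeReward lam1 lam2 D1 D2 (dist y1 y2) (H + dist w y1)
      else routeReward lam2 lam1 D2 D1 (dist y2 y1) (H + dist w y2) := by
    intro w
    simp only [hJ, hφ1, hφ2, routeReward]
  have hR12' : R12 = routeReward lam1 lam2 D1 D2 (dist y1 y2) H := hR12.trans (by rw [hH]; rfl)
  have hR21' : R21 = routeReward lam2 lam1 D2 D1 (dist y2 y1) (dist x y2) := hR21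
  have anti₁ := routeReward_antitone hlam1.le hlam2.le hD1.le hD2.le (dist y1 y2)
  have anti₂ := routeReward_antitone hlam2.le hlam1.le hD2.le hD1.le (dist y2 y1)
  have hC2y2 : dist C2 y2 = dist x y2 - H := by
    rw [hC2, add_comm, ← lineMap_apply_module']
    exact dist_lineMap_div_dist_right x y2 hH0 (hH ▸ hd)
  refine ⟨fun w hw => ?_, ?_⟩
  · rw [hJ']
    split_ifs
    · exact (anti₁ (le_add_of_nonneg_right dist_nonneg)).trans (hR12' ▸ le_max_left _ _)
    · have htri : dist x y2 ≤ H + dist w y2 := hw ▸ dist_comm w x ▸ dist_triangle x w y2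
      exact (anti₂ htri).trans (hR21' ▸ le_max_right _ _)
  rcases le_or_gt R21 R12 with h | h
  · left
    rw [max_eq_left h, hJ', if_pos (by simp only [dist_self, mul_zero]; positivity), hR12',
      dist_self, add_zero]
  · right
    have hgreedy : (D2 / lam2) * dist C2 y2 < (D1 / lam1) * dist C2 y1 := by
      have hb : dist y1 y2 - dist C2 y2 ≤ dist C2 y1 := by
        linarith [dist_triangle y1 C2 y2, dist_comm y1 C2]
      rw [hR12', hR21', dist_comm y2 y1] at h
      exact travelCost_lt_of_routeReward_lt hlam1 hlam2 hD1 hD2 dist_nonneg hb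
        (by rwa [hC2y2, add_sub_cancel])
    rw [max_eq_right h.le, hJ', if_neg hgreedy.not_ge, hC2y2, hR21', add_sub_cancel]

/-- two-target specialization of Lemma 2: the greedy one-step
lookahead objective `J` over the reachable circle of radius `H = d(x,y1)` is
bounded by `max R12 R21`, and this bound is attained at the heading toward an
active target: at `w = y1` or at `w = C2`. -/
theorem stmt9 (x y1 y2 : EuclideanSpace ℝ (Fin 2))
    (hy : y1 ≠ y2) (hx2 : x ≠ y2)
    (hpos : 0 < dist x y1) (hd : dist x y1 ≤ dist x y2)
    (H : ℝ) (hH : H = dist x y1)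
    (lam1 lam2 D1 D2 : ℝ)
    (hlam1 : 0 < lam1) (hlam2 : 0 < lam2) (hD1 : 0 < D1) (hD2 : 0 < D2)
    (φ1 φ2 : ℝ → ℝ)
    (hφ1 : ∀ t, φ1 t = 1 - t / D1) (hφ2 : ∀ t, φ2 t = 1 - t / D2)
    (J : EuclideanSpace ℝ (Fin 2) → ℝ)
    (hJ : ∀ w, J w =
      if (D1 / lam1) * dist w y1 ≤ (D2 / lam2) * dist w y2
      then lam1 * φ1 (H + dist w y1) + lam2 * φ2 (H + dist w y1 + dist y1 y2)
      else lam2 * φ2 (H + dist w y2) + lam1 * φ1 (H + dist w y2 + dist y2 y1))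
    (C2 : EuclideanSpace ℝ (Fin 2))
    (hC2 : C2 = x + (H / dist x y2) • (y2 - x))
    (R12 R21 : ℝ)
    (hR12 : R12 = lam1 * (1 - dist x y1 / D1)
      + lam2 * (1 - (dist x y1 + dist y1 y2) / D2))
    (hR21 : R21 = lam2 * (1 - dist x y2 / D2)
      + lam1 * (1 - (dist x y2 + dist y2 y1) / D1)) :
    (∀ w : EuclideanSpace ℝ (Fin 2), dist w x = H → J w ≤ max R12 R21) ∧
      (J y1 = max R12 R21 ∨ J C2 = max R12 R21) :=
  stmt9_general x y1 y2 hd H hH lam1 lam2 D1 D2 hlam1 hlam2 hD1 hD2 φ1 φ2 hφ1 hφ2 J hJ C2 hC2 R12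
    R21 hR12 hR21
end
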